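/- arXiv:2106.14285 — 3 statements merged into one kernel-verified Lean document; each statement's English description precedes it below -/
import Mathlib

section
/- If u is a twin vertex of a connected graph G and S is a fault-tolerant resolving set of G, then u ∈ S. -/
open SimpleGraph

variable {V : Type*}

/-- `S` is a resolving set of `G`. -/
def ResSet (G : SimpleGraph V) (S : Set V) : Prop :=
  ∀ x y : V, x ≠ y → ∃ w ∈ S, G.dist x w ≠ G.dist y w

/-- `S` is a fault-tolerant resolving set of `G`. -/
def FTResSet (G : SimpleGraph V) (S : Set V) : Prop :=
  ResSet G S ∧ ∀ x ∈ S, ResSet G (S \ {x})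

/-- Metric dimension. -/
noncomputable def md (G : SimpleGraph V) : ℕ :=
  sInf {n | ∃ S : Set V, S.ncard = n ∧ ResSet G S}

/-- Fault-tolerant metric dimension. -/
noncomputable def ftmd (G : SimpleGraph V) : ℕ :=
  sInf {n | ∃ S : Set V, S.ncard = n ∧ FTResSet G S}

/-- `u` and `v` are twins: distinct and with equal open or equal closed neighborhoods. -/
def IsTwinPair (G : SimpleGraph V) (u v : V) : Prop :=
  u ≠ v ∧ (G.neighborSet u = G.neighborSet v ∨
    G.neighborSet u ∪ {u} = G.neighborSet v ∪ {v})

/-- `u` is a twin vertex. -/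
def IsTwin (G : SimpleGraph V) (u : V) : Prop := ∃ v, IsTwinPair G u v

lemma twin_symm {G : SimpleGraph V} {u v : V} (h : IsTwinPair G u v) : IsTwinPair G v u :=
  ⟨h.1.symm, h.2.imp Eq.symm Eq.symm⟩

lemma twin_dist_le {G : SimpleGraph V} (hG : G.Connected) {u v : V}
    (h : IsTwinPair G u v) {w : V} (hwu : w ≠ u) (hwv : w ≠ v) :
    G.dist v w ≤ G.dist u w := by
  obtain ⟨p, hp⟩ := (hG u w).exists_walk_length_eq_dist
  cases p with
  | nil => exact absurd rfl hwu.symm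
  | @cons _ x _ hadj q =>
    simp only [Walk.length_cons] at hp
    by_cases hxv : x = v
    · subst hxv
      calc G.dist x w ≤ q.length := G.dist_le q
        _ ≤ q.length + 1 := Nat.le_succ _
        _ = G.dist u w := hp
    · have hx : G.Adj v x := by
        rcases h.2 with he | he
        · have : x ∈ G.neighborSet v := he ▸ hadj
          exact this
        · have hx1 : x ∈ G.neighborSet u ∪ {u} := Set.mem_union_left _ hadj
          have hx2 : x ∈ G.neighborSet v ∪ {v} := he ▸ hx1
          rcases hx2 with h' | h'
          · exact h'
          · exact absurd h' hxv
      calc G.dist v w ≤ (Walk.cons hx q).length := G.dist_le _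
        _ = q.length + 1 := Walk.length_cons _ _
        _ = G.dist u w := hp

lemma twin_dist_eq {G : SimpleGraph V} (hG : G.Connected) {u v : V}
    (h : IsTwinPair G u v) {w : V} (hwu : w ≠ u) (hwv : w ≠ v) :
    G.dist u w = G.dist v w :=
  le_antisymm (twin_dist_le hG (twin_symm h) hwv hwu) (twin_dist_le hG h hwu hwv)

theorem twin_mem_ft_resolving [Fintype V] (G : SimpleGraph V) (hG : G.Connected)
    (u : V) (hu : IsTwin G u) (S : Set V) (hS : FTResSet G S) : u ∈ S := by
  obtain ⟨v, hpair⟩ := hu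
  by_contra huS
  obtain ⟨w, hwS, hwd⟩ := hS.1 u v hpair.1
  have hvS : w = v := by
    by_contra hwv
    have hwu : w ≠ u := fun h => huS (h ▸ hwS)
    exact hwd (twin_dist_eq hG hpair hwu hwv)
  subst hvS
  obtain ⟨w', hw'S, hw'd⟩ := hS.2 w hwS u w hpair.1
  have hw'w : w' ≠ w := hw'S.2
  have hw'u : w' ≠ u := fun h => huS (h ▸ hw'S.1)
  exact hw'd (twin_dist_eq hG hpair hw'u hw'w)
end

section
/- If u is a vertex of a connected graph G of order at least 2 that is not a twin vertex, then V(G) ∖ {u} is a fault-tolerant resolving set of G. -/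
open SimpleGraph

variable {V : Type*}

/-! A vertex is resolved from every other vertex by itself (at distance `0`), so `V ∖ {u, s}` can only fail
to resolve the pair `u, s`. A vertex `w ∉ {u, s}` with `d(u, w) ≠ d(s, w)` exists unless `u` and `s`
have the same neighbours outside `{u, s}` (the case of distance `1`), which makes them twins. -/

namespace SimpleGraph

variable {G : SimpleGraph V}

lemma isTwinPair_of_forall_adj_iff {u v : V} (huv : u ≠ v)
    (h : ∀ w, w ≠ u → w ≠ v → (G.Adj u w ↔ G.Adj v w)) : IsTwinPair G u v := by
  refine ⟨huv, ?_⟩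
  by_cases huv_adj : G.Adj u v
  · right
    ext w
    simp only [Set.mem_union, mem_neighborSet, Set.mem_singleton_iff]
    by_cases hwu : w = u
    · simp [hwu, huv_adj.symm]
    by_cases hwv : w = v
    · simp [hwv, huv_adj]
    simp [hwu, hwv, h w hwu hwv]
  · left
    ext w
    simp only [mem_neighborSet]
    by_cases hwu : w = u
    · simp [hwu, G.adj_comm v u, huv_adj]
    by_cases hwv : w = v
    · simp [hwv, huv_adj]
    exact h w hwu hwv

lemma exists_dist_ne_of_not_isTwinPair {u v : V} (huv : u ≠ v) (h : ¬ IsTwinPair G u v) :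
    ∃ w, w ≠ u ∧ w ≠ v ∧ G.dist u w ≠ G.dist v w := by
  by_contra! hdist
  refine h (isTwinPair_of_forall_adj_iff huv fun w hwu hwv => ?_)
  rw [← dist_eq_one_iff_adj, ← dist_eq_one_iff_adj, hdist w hwu hwv]

lemma Connected.resSet_compl_pair (hG : G.Connected) {u v : V} (h : ¬ IsTwinPair G u v) :
    ResSet G {u, v}ᶜ := by
  intro x y hxy
  by_cases hx : x ∈ ({u, v} : Set V)ᶜ
  · exact ⟨x, hx, by rw [dist_self]; exact (hG.pos_dist_of_ne hxy.symm).ne⟩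
  by_cases hy : y ∈ ({u, v} : Set V)ᶜ
  · exact ⟨y, hy, by rw [dist_self]; exact (hG.pos_dist_of_ne hxy).ne'⟩
  simp only [Set.mem_compl_iff, Set.mem_insert_iff, Set.mem_singleton_iff, not_not] at hx hy
  have huv : u ≠ v := by rintro rfl; simp_all
  obtain ⟨w, hwu, hwv, hw⟩ := exists_dist_ne_of_not_isTwinPair huv h
  have hw_mem : w ∈ ({u, v} : Set V)ᶜ := by simp [hwu, hwv]
  rcases hx with rfl | rfl <;> rcases hy with rfl | rfl
  exacts [absurd rfl hxy, ⟨w, hw_mem, hw⟩, ⟨w, hw_mem, hw.symm⟩, absurd rfl hxy]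

end SimpleGraph

theorem compl_nontwin_ft_resolving_general (G : SimpleGraph V) (hG : G.Connected)
    (u : V) (hu : ¬ IsTwin G u) :
    FTResSet G ({u}ᶜ : Set V) := by
  constructor
  · simpa only [Set.pair_eq_singleton] using hG.resSet_compl_pair (v := u) fun h => h.1 rfl
  · intro s _
    rw [Set.sdiff_eq, ← Set.compl_union, ← Set.insert_eq]
    exact hG.resSet_compl_pair fun h => hu ⟨s, h⟩

theorem compl_nontwin_ft_resolving [Fintype V] (G : SimpleGraph V) (hG : G.Connected)
    (hn : 2 ≤ Fintype.card V) (u : V) (hu : ¬ IsTwin G u) :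
    FTResSet G ({u}ᶜ : Set V) :=
  compl_nontwin_ft_resolving_general G hG u hu
end

section
/- If G is a connected graph in which some vertex is not a twin vertex, then β'(G) ≤ n(G) - 1. -/
open SimpleGraph

variable {V : Type*}

private lemma self_resolves (G : SimpleGraph V) (hG : G.Connected) {x y : V} (hxy : x ≠ y) :
    G.dist x x ≠ G.dist y x := by
  rw [G.dist_self]
  exact (Nat.pos_of_ne_zero (fun h0 => hxy (hG.dist_eq_zero_iff.mp h0).symm)).ne

private lemma nontwin_resolves (G : SimpleGraph V) (hG : G.Connected) {u v : V}
    (hu : ¬ IsTwin G u) (huv : u ≠ v) :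
    ∃ w, w ≠ u ∧ w ≠ v ∧ G.dist u w ≠ G.dist v w := by
  have hnp : ¬ IsTwinPair G u v := fun hp => hu ⟨v, hp⟩
  rw [IsTwinPair, not_and_or, not_or] at hnp
  rcases hnp with h | ⟨hopen, hclosed⟩
  · exact absurd huv h
  by_cases hadj : G.Adj u v
  · -- closed neighborhoods differ
    have hex := mt Set.ext hclosed
    push_neg at hex
    obtain ⟨w, hw⟩ := hex
    have key : ∀ a b : V, G.Adj a b →
        w ∈ G.neighborSet a ∪ {a} → w ∉ G.neighborSet b ∪ {b} →
        w ≠ a ∧ w ≠ b ∧ G.dist a w ≠ G.dist b w := by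
      intro a b hab hwa hwb
      have hwb' : ¬ G.Adj b w := fun h => hwb (Or.inl h)
      have hwnb : w ≠ b := fun h => hwb (Or.inr h)
      have hwna : w ≠ a := by
        rintro rfl
        exact hwb (Or.inl hab.symm)
      have hwa' : G.Adj a w := by
        rcases hwa with h | h
        · exact h
        · exact absurd h hwna
      refine ⟨hwna, hwnb, ?_⟩
      rw [dist_eq_one_iff_adj.mpr hwa']
      exact fun h => hwb' (dist_eq_one_iff_adj.mp h.symm)
    rcases hw with ⟨h1, h2⟩ | ⟨h1, h2⟩
    · exact ⟨w, key u v hadj h1 h2⟩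
    · obtain ⟨a, b, c⟩ := key v u hadj.symm h2 h1
      exact ⟨w, b, a, c.symm⟩
  · -- open neighborhoods differ
    have hex := mt Set.ext hopen
    push_neg at hex
    obtain ⟨w, hw⟩ := hex
    have key : ∀ a b : V, ¬ G.Adj a b →
        w ∈ G.neighborSet a → w ∉ G.neighborSet b →
        w ≠ a ∧ w ≠ b ∧ G.dist a w ≠ G.dist b w := by
      intro a b hab hwa hwb
      have hwna : w ≠ a := fun h => G.irrefl (h ▸ hwa)
      have hwnb : w ≠ b := by
        rintro rfl
        exact hab hwa
      refine ⟨hwna, hwnb, ?_⟩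
      rw [dist_eq_one_iff_adj.mpr hwa]
      exact fun h => hwb (dist_eq_one_iff_adj.mp h.symm)
    rcases hw with ⟨h1, h2⟩ | ⟨h1, h2⟩
    · exact ⟨w, key u v hadj h1 h2⟩
    · obtain ⟨a, b, c⟩ := key v u (fun h => hadj h.symm) h2 h1
      exact ⟨w, b, a, c.symm⟩

theorem ftmd_le_of_nontwin [Fintype V] (G : SimpleGraph V) (hG : G.Connected)
    (hn : 2 ≤ Fintype.card V) (h : ∃ u : V, ¬ IsTwin G u) :
    ftmd G ≤ Fintype.card V - 1 := by
  obtain ⟨u, hu⟩ := h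
  set S : Set V := Set.univ \ {u} with hS
  have hcard : S.ncard = Fintype.card V - 1 := by
    rw [hS, Set.ncard_diff (by simp), Set.ncard_univ, Set.ncard_singleton,
      Nat.card_eq_fintype_card]
  have hft : FTResSet G S := by
    constructor
    · intro x y hxy
      by_cases hxu : x = u
      · refine ⟨y, ⟨Set.mem_univ y, fun hy => hxy (hxu.trans hy.symm)⟩, ?_⟩
        exact (self_resolves G hG hxy.symm).symm
      · exact ⟨x, ⟨Set.mem_univ x, hxu⟩, self_resolves G hG hxy⟩
    · intro a ha x y hxy
      by_cases hxS : x ∈ S \ {a}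
      · exact ⟨x, hxS, self_resolves G hG hxy⟩
      by_cases hyS : y ∈ S \ {a}
      · exact ⟨y, hyS, (self_resolves G hG hxy.symm).symm⟩
      have hx : x = u ∨ x = a := by
        by_contra hc
        push_neg at hc
        exact hxS ⟨⟨Set.mem_univ x, hc.1⟩, hc.2⟩
      have hy : y = u ∨ y = a := by
        by_contra hc
        push_neg at hc
        exact hyS ⟨⟨Set.mem_univ y, hc.1⟩, hc.2⟩
      rcases hx with rfl | rfl <;> rcases hy with rfl | rfl
      · exact absurd rfl hxy
      · obtain ⟨w, hw1, hw2, hw3⟩ := nontwin_resolves G hG hu hxy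
        exact ⟨w, ⟨⟨Set.mem_univ w, hw1⟩, hw2⟩, hw3⟩
      · obtain ⟨w, hw1, hw2, hw3⟩ := nontwin_resolves G hG hu hxy.symm
        exact ⟨w, ⟨⟨Set.mem_univ w, hw1⟩, hw2⟩, hw3.symm⟩
      · exact absurd rfl hxy
  exact Nat.sInf_le ⟨S, hcard, hft⟩
end
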